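/- arXiv:2310.02741 — 3 statements merged into one kernel-verified Lean document; each statement's English description precedes it below -/
import Mathlib

section
/- Let γ ∈ ℝ. The Jacobian matrix (3×3 matrix of partial derivatives) of the vector field G_γ at the equilibrium point P₁ = (0, 0, 0) is the diagonal matrix diag(3(γ − 1)/2, 3(γ − 2)/2, 3γ − 2); in particular its eigenvalues are 3(γ − 1)/2, 3(γ − 2)/2 and 3γ − 2, and, for γ ∈ [0, 2], all three eigenvalues are negative if and only if γ < 2/3. -/
/-!
Each component of `G_γ` is its own coordinate times a polynomial `q_i`, so by the product rule
the linearization at the origin is diagonal with entries `q_i(0)`.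
-/

/-- The averaged Bianchi V guiding vector field `G_γ` in coordinates
`p = (Ω, Σ, K) = (p 0, p 1, p 2)`. -/
noncomputable def GBV (γ : ℝ) : (Fin 3 → ℝ) → (Fin 3 → ℝ) := fun p =>
  ![-(1 / 2) * p 0 *
      (3 * γ * ((p 1) ^ 2 + (p 0) ^ 2 + p 2 - 1) - 6 * (p 1) ^ 2 - 3 * (p 0) ^ 2
        - 2 * p 2 + 3),
    (1 / 2) * p 1 *
      (-(3 * γ) * ((p 1) ^ 2 + (p 0) ^ 2 + p 2 - 1) + 6 * (p 1) ^ 2 + 3 * (p 0) ^ 2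
        + 2 * p 2 - 6),
    -(p 2) *
      (3 * γ * ((p 1) ^ 2 + (p 0) ^ 2 + p 2 - 1) - 6 * (p 1) ^ 2 - 3 * (p 0) ^ 2
        - 2 * p 2 + 2)]

section

variable {𝕜 ι : Type*} [NontriviallyNormedField 𝕜] [CompleteSpace 𝕜] [Fintype ι] [DecidableEq ι]

theorem ContinuousLinearMap.proj_comp_toLin'_diagonal (d : ι → 𝕜) (i : ι) :
    (ContinuousLinearMap.proj i).comp (Matrix.toLin' (Matrix.diagonal d)).toContinuousLinearMap =
      d i • ContinuousLinearMap.proj i := by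
  ext v
  simp [Matrix.mulVec_diagonal]

theorem hasFDerivAt_zero_of_apply_eq_mul_coord {F : (ι → 𝕜) → ι → 𝕜} (q : ι → (ι → 𝕜) → 𝕜)
    (hq : ∀ i, DifferentiableAt 𝕜 (q i) 0) (hF : ∀ p i, F p i = p i * q i p) :
    HasFDerivAt F (Matrix.toLin' (Matrix.diagonal fun i => q i 0)).toContinuousLinearMap 0 := by
  rw [hasFDerivAt_pi']
  intro i
  rw [ContinuousLinearMap.proj_comp_toLin'_diagonal]
  have hprod := (hasFDerivAt_apply i (0 : ι → 𝕜)).mul (hq i).hasFDerivAt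
  refine (hprod.congr_of_eventuallyEq (.of_forall fun p => hF p i)).congr_fderiv ?_
  ext
  simp

end

theorem bianchiV_P1_eigenvalues_neg_iff (γ : ℝ) :
    (3 * (γ - 1) / 2 < 0 ∧ 3 * (γ - 2) / 2 < 0 ∧ 3 * γ - 2 < 0) ↔ γ < 2 / 3 :=
  ⟨fun ⟨_, _, h⟩ => by linarith, fun h => ⟨by linarith, by linarith, by linarith⟩⟩

/-- The Jacobian of `G_γ` at `P₁ = (0,0,0)` is `diag(3(γ-1)/2, 3(γ-2)/2, 3γ-2)`;
for `γ ∈ [0,2]` all three eigenvalues are negative iff `γ < 2/3`. -/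
theorem bianchiV_jacobian_P1 (γ : ℝ) :
    HasFDerivAt (GBV γ)
      (LinearMap.toContinuousLinearMap
        (Matrix.toLin'
          (Matrix.diagonal ![3 * (γ - 1) / 2, 3 * (γ - 2) / 2, 3 * γ - 2])))
      ![0, 0, 0] ∧
    (0 ≤ γ ∧ γ ≤ 2 →
      ((3 * (γ - 1) / 2 < 0 ∧ 3 * (γ - 2) / 2 < 0 ∧ 3 * γ - 2 < 0) ↔ γ < 2 / 3)) := by
  refine ⟨?_, fun _ => bianchiV_P1_eigenvalues_neg_iff γ⟩
  let s : (Fin 3 → ℝ) → ℝ := fun p =>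
    3 * γ * (p 1 ^ 2 + p 0 ^ 2 + p 2 - 1) - 6 * p 1 ^ 2 - 3 * p 0 ^ 2 - 2 * p 2
  let q : Fin 3 → (Fin 3 → ℝ) → ℝ :=
    ![fun p => -(1 / 2) * (s p + 3), fun p => -(1 / 2) * (s p + 6), fun p => -(s p + 2)]
  have hq : ∀ i, DifferentiableAt ℝ (q i) 0 := fun i => by fin_cases i <;> (simp [q, s]; fun_prop)
  have hGBV : ∀ p i, GBV γ p i = p i * q i p := fun p i => by
    fin_cases i <;> (simp [GBV, q, s]; ring)
  have hq0 : (fun i => q i 0) = ![3 * (γ - 1) / 2, 3 * (γ - 2) / 2, 3 * γ - 2] := by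
    ext i; fin_cases i <;> (simp [q, s]; ring)
  rw [← hq0, show ![(0 : ℝ), 0, 0] = 0 by simp]
  exact hasFDerivAt_zero_of_apply_eq_mul_coord q hq hGBV
end

section
/- Let γ ∈ ℝ. The Jacobian matrix of the vector field G_γ at the equilibrium point P₂ = (1, 0, 0) has eigenvalues −3/2, 1 and 3 − 3γ (i.e. its characteristic polynomial is (X + 3/2)(X − 1)(X − (3 − 3γ))). In particular, for every γ the linearization at P₂ has at least one positive and at least one negative eigenvalue, so P₂ is never a sink nor (for γ ≤ 1) a source of the linearization. -/
open Polynomial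

/-- The Jacobian of `G_γ` at `P₂ = (1,0,0)` has eigenvalues `-3/2`, `1` and
`3 - 3γ` (characteristic polynomial `(X + 3/2)(X - 1)(X - (3 - 3γ))`); in
particular it always has at least one negative and at least one positive
eigenvalue, so `P₂` is never a sink nor (for `γ ≤ 1`) a source of the
linearization. -/
theorem bianchiV_jacobian_P2 (γ : ℝ) :
    ∃ J : Matrix (Fin 3) (Fin 3) ℝ,
      HasFDerivAt (GBV γ)
        (LinearMap.toContinuousLinearMap (Matrix.toLin' J)) ![1, 0, 0] ∧
      J.charpoly = (X + C (3 / 2)) * (X - C 1) * (X - C (3 - 3 * γ)) ∧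
      (∃ a b : ℝ, a < 0 ∧ 0 < b ∧ J.charpoly.IsRoot a ∧ J.charpoly.IsRoot b) := by
  set J : Matrix (Fin 3) (Fin 3) ℝ :=
    !![3 - 3 * γ, 0, 1 - 3 * γ / 2; 0, -(3/2), 0; 0, 0, 1] with hJ
  have hcp : J.charpoly = (X + C (3 / 2)) * (X - C 1) * (X - C (3 - 3 * γ)) := by
    rw [Matrix.charpoly, Matrix.det_fin_three]
    simp [Matrix.charmatrix_apply, hJ, Matrix.diagonal_apply, Matrix.vecHead, Matrix.vecTail]
    ring
  refine ⟨J, ?_, hcp, ⟨-(3/2), 1, by norm_num, by norm_num, ?_, ?_⟩⟩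
  · set c : Fin 3 → ℝ := ![1, 0, 0] with hc
    have h0 : HasFDerivAt (fun p : Fin 3 → ℝ => p 0)
        (ContinuousLinearMap.proj (0 : Fin 3) : (Fin 3 → ℝ) →L[ℝ] ℝ) c := (ContinuousLinearMap.proj (0 : Fin 3) : (Fin 3 → ℝ) →L[ℝ] ℝ).hasFDerivAt
    have h1 : HasFDerivAt (fun p : Fin 3 → ℝ => p 1)
        (ContinuousLinearMap.proj (1 : Fin 3) : (Fin 3 → ℝ) →L[ℝ] ℝ) c := (ContinuousLinearMap.proj (1 : Fin 3) : (Fin 3 → ℝ) →L[ℝ] ℝ).hasFDerivAt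
    have h2 : HasFDerivAt (fun p : Fin 3 → ℝ => p 2)
        (ContinuousLinearMap.proj (2 : Fin 3) : (Fin 3 → ℝ) →L[ℝ] ℝ) c := (ContinuousLinearMap.proj (2 : Fin 3) : (Fin 3 → ℝ) →L[ℝ] ℝ).hasFDerivAt
    rw [hasFDerivAt_pi']
    intro i
    fin_cases i <;>
      simp only [GBV, Matrix.cons_val_zero, Matrix.cons_val_one, Matrix.head_cons,
        Matrix.cons_val_two, Matrix.tail_cons, pow_two]
    · have H := ((h0.const_mul (-(1/2 : ℝ))).mul
        (((((((h1.mul h1).add (h0.mul h0)).add h2).sub_const 1).const_mul (3*γ)).sub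
          ((h1.mul h1).const_mul 6)).sub ((h0.mul h0).const_mul 3) |>.sub
          (h2.const_mul 2) |>.add_const 3))
      refine H.congr_fderiv ?_
      ext v
      simp [hc, hJ, Matrix.toLin'_apply, Matrix.mulVec, dotProduct,
        Fin.sum_univ_three]
      ring
    · have H := ((h1.const_mul ((1/2 : ℝ))).mul
        (((((((h1.mul h1).add (h0.mul h0)).add h2).sub_const 1).const_mul (-(3*γ))).add
          ((h1.mul h1).const_mul 6)).add ((h0.mul h0).const_mul 3) |>.add
          (h2.const_mul 2) |>.sub_const 6))
      refine H.congr_fderiv ?_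
      ext v
      simp [hc, hJ, Matrix.toLin'_apply, Matrix.mulVec, dotProduct,
        Fin.sum_univ_three]
      ring
    · have H := ((h2.neg).mul
        (((((((h1.mul h1).add (h0.mul h0)).add h2).sub_const 1).const_mul (3*γ)).sub
          ((h1.mul h1).const_mul 6)).sub ((h0.mul h0).const_mul 3) |>.sub
          (h2.const_mul 2) |>.add_const 2))
      refine H.congr_fderiv ?_
      ext v
      simp [hc, hJ, Matrix.toLin'_apply, Matrix.mulVec, dotProduct,
        Fin.sum_univ_three]
      ring
  · rw [hcp]; simp [IsRoot]
  · rw [hcp]; simp [IsRoot]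
end

section
/- Let γ ∈ ℝ. The Jacobian matrix of the vector field G_γ at the equilibrium point P₃ = (0, 0, 1) has eigenvalues −2, −1/2 and 2 − 3γ (i.e. its characteristic polynomial is (X + 2)(X + 1/2)(X − (2 − 3γ))). In particular, for γ ∈ [0, 2], all three eigenvalues are negative if and only if γ > 2/3. -/
open Polynomial

/-!
The three brackets of `G_γ` differ only by constants from the single quantity
`r = (3γ - 6)Σ² + (3γ - 3)Ω² + (3γ - 2)(K - 1)`, so that
`G_γ = (-(Ω/2)(r + 1), -(Σ/2)(r + 4), -K r)`.
Since `r` vanishes at `P₃` and its only first-order term there is `(3γ - 2)(K - 1)`, the product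
rule gives a diagonal Jacobian with entries `-1/2`, `-2` and `2 - 3γ`.
-/

theorem hasFDerivAt_apply_sq_of_eq_zero {𝕜 ι : Type*} [NontriviallyNormedField 𝕜] [Fintype ι]
    (i : ι) {p : ι → 𝕜} (hp : p i = 0) :
    HasFDerivAt (fun q : ι → 𝕜 => q i ^ 2) (0 : (ι → 𝕜) →L[𝕜] 𝕜) p :=
  ((hasFDerivAt_apply (𝕜 := 𝕜) i p).pow 2).congr_fderiv (by ext; simp [hp])

namespace GBV

def rate (γ : ℝ) (p : Fin 3 → ℝ) : ℝ :=
  (3 * γ - 6) * p 1 ^ 2 + (3 * γ - 3) * p 0 ^ 2 + (3 * γ - 2) * (p 2 - 1)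

theorem apply_eq_rate (γ : ℝ) (p : Fin 3 → ℝ) :
    GBV γ p = ![-(1 / 2) * p 0 * (rate γ p + 1), -(1 / 2) * p 1 * (rate γ p + 4),
      -(p 2) * rate γ p] := by
  ext i
  fin_cases i <;>
    simp only [GBV, rate, Fin.zero_eta, Fin.mk_one, Fin.reduceFinMk, Matrix.cons_val] <;> ring

theorem rate_P3 (γ : ℝ) : rate γ ![0, 0, 1] = 0 := by
  simp [rate]

theorem hasFDerivAt_rate_P3 (γ : ℝ) :
    HasFDerivAt (rate γ)
      ((3 * γ - 2) • ContinuousLinearMap.proj 2 : (Fin 3 → ℝ) →L[ℝ] ℝ) ![0, 0, 1] := by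
  have hS := hasFDerivAt_apply_sq_of_eq_zero (p := ![(0 : ℝ), 0, 1]) 1 rfl
  have hO := hasFDerivAt_apply_sq_of_eq_zero (p := ![(0 : ℝ), 0, 1]) 0 rfl
  have hK := (hasFDerivAt_apply (𝕜 := ℝ) 2 ![(0 : ℝ), 0, 1]).sub_const 1
  refine (((hS.const_mul (3 * γ - 6)).add (hO.const_mul (3 * γ - 3))).add
    (hK.const_mul (3 * γ - 2))).congr_fderiv ?_
  simp

noncomputable def jacobianP3 (γ : ℝ) : Matrix (Fin 3) (Fin 3) ℝ :=
  Matrix.diagonal ![-(1 / 2), -2, 2 - 3 * γ]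

theorem hasFDerivAt_P3 (γ : ℝ) :
    HasFDerivAt (GBV γ) (LinearMap.toContinuousLinearMap (Matrix.toLin' (jacobianP3 γ)))
      ![0, 0, 1] := by
  have hr := hasFDerivAt_rate_P3 γ
  have hp (i : Fin 3) := hasFDerivAt_apply (𝕜 := ℝ) i ![(0 : ℝ), 0, 1]
  rw [show GBV γ = _ from funext (apply_eq_rate γ)]
  refine hasFDerivAt_pi'.2 fun i => ?_
  fin_cases i <;> [
    refine (((hp 0).const_mul (-(1 / 2))).mul (hr.add_const 1)).congr_fderiv ?_;
    refine (((hp 1).const_mul (-(1 / 2))).mul (hr.add_const 4)).congr_fderiv ?_;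
    refine ((hp 2).neg.mul hr).congr_fderiv ?_] <;>
  · ext v
    simp only [jacobianP3, rate_P3, Fin.zero_eta, Fin.mk_one, Fin.reduceFinMk, Matrix.cons_val,
      Pi.neg_apply, add_apply, smul_apply, neg_apply, smul_eq_mul,
      ContinuousLinearMap.proj_apply, ContinuousLinearMap.comp_apply,
      LinearMap.coe_toContinuousLinearMap', Matrix.toLin'_apply, Matrix.mulVec_diagonal]
    ring

theorem charpoly_jacobianP3 (γ : ℝ) :
    (jacobianP3 γ).charpoly = (X + C 2) * (X + C (1 / 2)) * (X - C (2 - 3 * γ)) := by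
  simp only [jacobianP3, Matrix.charpoly_diagonal, Fin.prod_univ_three, Matrix.cons_val,
    map_neg, sub_neg_eq_add]
  ring

end GBV

/-- The Jacobian of `G_γ` at `P₃ = (0,0,1)` has eigenvalues `-2`, `-1/2` and
`2 - 3γ` (characteristic polynomial `(X + 2)(X + 1/2)(X - (2 - 3γ))`); for
`γ ∈ [0,2]` all three eigenvalues are negative iff `γ > 2/3`. -/
theorem bianchiV_jacobian_P3 (γ : ℝ) :
    ∃ J : Matrix (Fin 3) (Fin 3) ℝ,
      HasFDerivAt (GBV γ)
        (LinearMap.toContinuousLinearMap (Matrix.toLin' J)) ![0, 0, 1] ∧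
      J.charpoly = (X + C 2) * (X + C (1 / 2)) * (X - C (2 - 3 * γ)) ∧
      (0 ≤ γ ∧ γ ≤ 2 →
        (((-2 : ℝ) < 0 ∧ (-(1 / 2) : ℝ) < 0 ∧ 2 - 3 * γ < 0) ↔ 2 / 3 < γ)) :=
  ⟨GBV.jacobianP3 γ, GBV.hasFDerivAt_P3 γ, GBV.charpoly_jacobianP3 γ, fun _ =>
    ⟨fun ⟨_, _, h⟩ => by linarith, fun h => ⟨by norm_num, by norm_num, by linarith⟩⟩⟩
end
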